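/- Let V be a Euclidean Jordan algebra with cone of squares Q, and L a Jordan subalgebra of V with cone of squares Q_0 = {x² : x ∈ L}. Then for every x in L, P_Q(x) = P_{Q_0}(x) ∈ L; consequently P_Q(L) ⊆ L, i.e., L is a lattice-like subspace of (V, Q). -/

import Mathlib

open scoped RealInnerProductSpace

/-- A Euclidean Jordan algebra structure on a real inner product space `V`:
a commutative bilinear product satisfying the Jordan identity, for which the
inner product is associative, together with a unit element. -/
structure EJA (V : Type*) [NormedAddCommGroup V] [InnerProductSpace ℝ V] where
  mul : V →ₗ[ℝ] V →ₗ[ℝ] V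
  comm : ∀ x y : V, mul x y = mul y x
  jordan : ∀ x y : V, mul x (mul (mul x x) y) = mul (mul x x) (mul x y)
  assoc_inner : ∀ x y z : V, ⟪mul x y, z⟫ = ⟪y, mul x z⟫
  one : V
  one_mul : ∀ x : V, mul one x = x

variable {V : Type*} [NormedAddCommGroup V] [InnerProductSpace ℝ V]

/-- The cone of squares of a Euclidean Jordan algebra. -/
def EJA.coneOfSquares (J : EJA V) : Set V := {x | ∃ y, x = J.mul y y}

/-- An idempotent element. -/
def EJA.IsIdem (J : EJA V) (c : V) : Prop := J.mul c c = c

/-- A primitive idempotent: a nonzero idempotent which is not the sum of two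
nonzero orthogonal idempotents. -/
def EJA.IsPrimitiveIdem (J : EJA V) (c : V) : Prop :=
  J.IsIdem c ∧ c ≠ 0 ∧
    ∀ u v : V, J.IsIdem u → J.IsIdem v → J.mul u v = 0 → c = u + v → u = 0 ∨ v = 0

/-- A Jordan frame: a complete system of mutually orthogonal primitive
idempotents summing to the unit. -/
def EJA.IsJordanFrame (J : EJA V) {r : ℕ} (c : Fin r → V) : Prop :=
  (∀ i, J.IsPrimitiveIdem (c i)) ∧
    (∀ i j, i ≠ j → J.mul (c i) (c j) = 0) ∧ (∑ i, c i) = J.one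

/-- An ideal of a Euclidean Jordan algebra. -/
def EJA.IsIdeal (J : EJA V) (I : Submodule ℝ V) : Prop :=
  ∀ x ∈ I, ∀ y : V, J.mul x y ∈ I

/-- A simple Euclidean Jordan algebra: nontrivial and with no nontrivial ideal. -/
def EJA.IsSimple (J : EJA V) : Prop :=
  (⊤ : Submodule ℝ V) ≠ ⊥ ∧ ∀ I : Submodule ℝ V, J.IsIdeal I → I = ⊥ ∨ I = ⊤

/-- `p` is the metric projection (nearest point) of `x` onto the set `D`. -/
def IsProjection {E : Type*} [NormedAddCommGroup E] (D : Set E) (x p : E) : Prop :=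
  p ∈ D ∧ ∀ z ∈ D, dist x p ≤ dist x z

/-!
The subalgebra generated by `x` is associative. This is power associativity, which comes from the
polarized Jordan identity: along `k + j = s` the commutator `[L_{x^(k+1)}, L_{x^(j+1)}]` is linear
in `k` yet antisymmetric, hence zero. Multiplication by `x` is symmetric on this subalgebra, so
`x = ∑ μ • c μ` for orthogonal idempotents `c μ` in it, hence in `L`. Splitting the eigenvalues by
sign gives `x = s² - u²` with `s ∈ L` and `⟪s², u²⟫ = 0`. Squares have nonnegative inner products
with each other, because `L_c` is positive semidefinite for an idempotent `c`. Thus `P = s²`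
satisfies the Moreau conditions `⟪P, P - x⟫ = 0` and `⟪z, P - x⟫ ≥ 0` for every square `z`, which
determine the nearest point of `x` both in `Q` and in `Q₀ ⊆ Q`.
-/

theorem LinearMap.IsSymmetric.exists_finsupp_eigenvectors {E : Type*} [NormedAddCommGroup E]
    [InnerProductSpace ℝ E] [FiniteDimensional ℝ E] {T : E →ₗ[ℝ] E} (hT : T.IsSymmetric)
    (x : E) : ∃ f : ℝ →₀ E, (∀ μ, T (f μ) = μ • f μ) ∧ (f.sum fun _ v => v) = x := by
  have htop : (⨆ μ, Module.End.eigenspace T μ) = ⊤ :=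
    Submodule.orthogonal_eq_bot_iff.mp hT.orthogonalComplement_iSup_eigenspaces_eq_bot
  obtain ⟨f, hf, hsum⟩ := (Submodule.mem_iSup_iff_exists_finsupp _ x).mp (by rw [htop]; trivial)
  exact ⟨f, fun μ => Module.End.mem_eigenspace_iff.mp (hf μ), hsum⟩

namespace EJA

variable (J : EJA V)

theorem jordan_polarized (x z y : V) :
    J.mul z (J.mul (J.mul x x) y) + (2 : ℝ) • J.mul x (J.mul (J.mul x z) y)
      = (2 : ℝ) • J.mul (J.mul x z) (J.mul x y) + J.mul (J.mul x x) (J.mul z y) := by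
  have hplus := J.jordan (x + z) y
  have hminus := J.jordan (x - z) y
  have hz := J.jordan z y
  simp only [map_add, map_sub, LinearMap.add_apply, LinearMap.sub_apply] at hplus hminus
  rw [J.comm z x] at hplus hminus
  linear_combination (norm := module) (2⁻¹ : ℝ) • hplus - (2⁻¹ : ℝ) • hminus - hz

theorem jordan_polarized₂ (x w z y : V) :
    J.mul z (J.mul (J.mul x w) y) + J.mul x (J.mul (J.mul w z) y)
        + J.mul w (J.mul (J.mul x z) y)
      = J.mul (J.mul w z) (J.mul x y) + J.mul (J.mul x z) (J.mul w y)
        + J.mul (J.mul x w) (J.mul z y) := by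
  have hxw := J.jordan_polarized (x + w) z y
  have hx := J.jordan_polarized x z y
  have hw := J.jordan_polarized w z y
  simp only [map_add, LinearMap.add_apply] at hxw
  rw [J.comm w x] at hxw
  linear_combination (norm := module) (2⁻¹ : ℝ) • hxw - (2⁻¹ : ℝ) • hx - (2⁻¹ : ℝ) • hw

/-- `J.powSucc a n` is `a ^ (n + 1)`. -/
def powSucc (a : V) : ℕ → V
  | 0 => a
  | n + 1 => J.mul a (powSucc a n)

theorem powSucc_zero (a : V) : J.powSucc a 0 = a := rfl

theorem powSucc_succ (a : V) (n : ℕ) : J.powSucc a (n + 1) = J.mul a (J.powSucc a n) := rfl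

def powCommutator (a : V) (i j : ℕ) (y : V) : V :=
  J.mul (J.powSucc a i) (J.mul (J.powSucc a j) y)
    - J.mul (J.powSucc a j) (J.mul (J.powSucc a i) y)

theorem powCommutator_swap (a : V) (i j : ℕ) (y : V) :
    J.powCommutator a i j y = -J.powCommutator a j i y := by
  simp only [powCommutator]; abel

theorem powCommutator_succ_left {a : V} {k j : ℕ}
    (h : J.mul (J.powSucc a k) (J.powSucc a j) = J.powSucc a (k + j + 1)) (y : V) :
    J.powCommutator a (k + 1) j y
      = J.powCommutator a k (j + 1) y + J.powCommutator a 0 (k + j + 1) y := by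
  have hpol := J.jordan_polarized₂ (J.powSucc a k) (J.powSucc a j) a y
  rw [h, J.comm (J.powSucc a j) a, J.comm (J.powSucc a k) a, ← powSucc_succ,
    ← powSucc_succ] at hpol
  simp only [powCommutator, powSucc_zero]
  linear_combination (norm := module) -hpol

section Level

variable {a : V} {s : ℕ}
  (hs : ∀ k j, k + j + 1 = s → J.mul (J.powSucc a k) (J.powSucc a j) = J.powSucc a s)
include hs

theorem powCommutator_eq_smul (y : V) :
    ∀ k j, k + j = s → J.powCommutator a k j y = ((k : ℝ) + 1) • J.powCommutator a 0 s y := by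
  intro k
  induction k with
  | zero => rintro j rfl; simp
  | succ k ih =>
    intro j hkj
    have hs' : k + j + 1 = s := by omega
    rw [J.powCommutator_succ_left ((hs k j hs').trans (congrArg _ hs'.symm)) y,
      ih (j + 1) (by omega), hs']
    push_cast
    module

theorem powCommutator_eq_zero (y : V) {k j : ℕ} (hkj : k + j = s) :
    J.powCommutator a k j y = 0 := by
  have hs0 := J.powCommutator_eq_smul hs y s 0 (add_zero s)
  rw [J.powCommutator_swap] at hs0
  have h : ((s : ℝ) + 2) • J.powCommutator a 0 s y = 0 := by
    linear_combination (norm := module) -hs0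
  rw [J.powCommutator_eq_smul hs y k j hkj,
    (smul_eq_zero.mp h).resolve_left (by positivity), smul_zero]

end Level

theorem powSucc_mul_powSucc (a : V) (m n : ℕ) :
    J.mul (J.powSucc a m) (J.powSucc a n) = J.powSucc a (m + n + 1) := by
  suffices ∀ s m n, m + n + 1 = s → J.mul (J.powSucc a m) (J.powSucc a n) = J.powSucc a s from
    this _ m n rfl
  intro s
  induction s using Nat.strong_induction_on with
  | _ s ih =>
    rintro m (_ | n) rfl
    · rw [J.comm, powSucc_zero, add_zero, powSucc_succ]
    · have hcomm := J.powCommutator_eq_zero (ih m (by omega)) (J.powSucc a n) (add_zero m)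
      rw [powCommutator, sub_eq_zero, powSucc_zero, ← powSucc_succ] at hcomm
      rw [hcomm, ih (m + n + 1) (by omega) m n rfl, ← powSucc_succ,
        show m + (n + 1) + 1 = m + n + 1 + 1 by omega]

def adjoin (a : V) : Submodule ℝ V :=
  Submodule.span ℝ (Set.range (J.powSucc a))

theorem self_mem_adjoin (a : V) : a ∈ J.adjoin a :=
  Submodule.subset_span ⟨0, rfl⟩

theorem mul_mem_adjoin {a b c : V} (hb : b ∈ J.adjoin a) (hc : c ∈ J.adjoin a) :
    J.mul b c ∈ J.adjoin a := by
  have hle : Submodule.map₂ J.mul (J.adjoin a) (J.adjoin a) ≤ J.adjoin a := by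
    rw [adjoin, Submodule.map₂_span_span, Submodule.span_le]
    rintro _ ⟨_, ⟨i, rfl⟩, _, ⟨j, rfl⟩, rfl⟩
    exact Submodule.subset_span ⟨i + j + 1, (J.powSucc_mul_powSucc a i j).symm⟩
  exact hle (Submodule.apply_mem_map₂ _ hb hc)

theorem mul_mul_eq_mul_mul_of_mem_adjoin {a b c : V} (hb : b ∈ J.adjoin a)
    (hc : c ∈ J.adjoin a) : J.mul a (J.mul b c) = J.mul (J.mul a b) c := by
  have hpow : ∀ i j, J.mul a (J.mul (J.powSucc a i) (J.powSucc a j))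
      = J.mul (J.mul a (J.powSucc a i)) (J.powSucc a j) := by
    intro i j
    rw [← powSucc_succ, J.powSucc_mul_powSucc, J.powSucc_mul_powSucc, ← powSucc_succ,
      show i + 1 + j + 1 = i + j + 1 + 1 by omega]
  have hright : ∀ i, J.mul a (J.mul (J.powSucc a i) c) = J.mul (J.mul a (J.powSucc a i)) c :=
    fun i => LinearMap.eqOn_span (f := J.mul a ∘ₗ J.mul (J.powSucc a i))
      (g := J.mul (J.mul a (J.powSucc a i))) (by rintro _ ⟨j, rfl⟩; exact hpow i j) hc
  exact LinearMap.eqOn_span (f := J.mul a ∘ₗ J.mul.flip c) (g := J.mul.flip c ∘ₗ J.mul a)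
    (by rintro _ ⟨i, rfl⟩; exact hright i) hb

theorem mul_eq_zero_of_eigenvectors {a b d : V} {μ ν : ℝ} (hb : b ∈ J.adjoin a)
    (hd : d ∈ J.adjoin a) (hbμ : J.mul a b = μ • b) (hdν : J.mul a d = ν • d) (hμν : μ ≠ ν) :
    J.mul b d = 0 := by
  have hleft : J.mul a (J.mul b d) = μ • J.mul b d := by
    rw [J.mul_mul_eq_mul_mul_of_mem_adjoin hb hd, hbμ, map_smul, LinearMap.smul_apply]
  have hright : J.mul a (J.mul b d) = ν • J.mul b d := by
    rw [J.comm b, J.mul_mul_eq_mul_mul_of_mem_adjoin hd hb, hdν, map_smul,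
      LinearMap.smul_apply, J.comm]
  have hzero : (μ - ν) • J.mul b d = 0 := by rw [sub_smul, ← hleft, ← hright, sub_self]
  exact (smul_eq_zero.mp hzero).resolve_left (sub_ne_zero.mpr hμν)

theorem adjoin_le {L : Submodule ℝ V} (hL : ∀ x ∈ L, ∀ y ∈ L, J.mul x y ∈ L) {a : V}
    (ha : a ∈ L) : J.adjoin a ≤ L := by
  rw [adjoin, Submodule.span_le]
  rintro _ ⟨n, rfl⟩
  induction n with
  | zero => exact ha
  | succ n ih => exact hL a ha _ ih

theorem eq_zero_of_mul_self_eq_zero {b : V} (h : J.mul b b = 0) : b = 0 := by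
  have h1 := J.assoc_inner b b J.one
  rw [h, J.comm b J.one, J.one_mul] at h1
  simpa using h1.symm

variable {J}

theorem IsIdem.inner_eq_zero_of_mul_eq_zero {c d : V} (hc : J.IsIdem c) (h : J.mul c d = 0) :
    ⟪c, d⟫ = 0 := by
  rw [← hc, J.assoc_inner, h, inner_zero_right]

theorem mul_self_sum_smul {ι : Type*} (S : Finset ι) {c : ι → V} (hc : ∀ i, J.IsIdem (c i))
    (horth : ∀ i j, i ≠ j → J.mul (c i) (c j) = 0) (f : ι → ℝ) :
    J.mul (∑ i ∈ S, f i • c i) (∑ i ∈ S, f i • c i) = ∑ i ∈ S, (f i ^ 2) • c i := by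
  simp only [map_sum, map_smul, LinearMap.sum_apply, LinearMap.smul_apply]
  refine Finset.sum_congr rfl fun i hi => ?_
  rw [Finset.sum_eq_single_of_mem i hi fun j _ hji => by rw [horth j i hji, smul_zero],
    hc i, smul_smul, sq]

theorem IsIdem.mul_cubic {c : V} (hc : J.IsIdem c) (v : V) :
    J.mul c v + (2 : ℝ) • J.mul c (J.mul c (J.mul c v)) = (3 : ℝ) • J.mul c (J.mul c v) := by
  have h := J.jordan_polarized c v c
  have hcc : J.mul c c = c := hc
  simp only [hcc] at h
  rw [J.comm v c, J.comm (J.mul c v) c] at h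
  linear_combination (norm := module) h

/-- By `IsIdem.mul_cubic` the symmetric operator `L_c` satisfies `L_c (2 L_c - 1) (L_c - 1) = 0`,
so its spectrum lies in `{0, 1/2, 1}`; this identity is the explicit positivity certificate. -/
theorem IsIdem.inner_mul_self_eq {c : V} (hc : J.IsIdem c) (u : V) :
    ⟪J.mul c u, u⟫ = ‖J.mul c u‖ ^ 2 + 4 * ‖J.mul c (J.mul c u) - J.mul c u‖ ^ 2 := by
  set T := J.mul c
  have hT : ∀ v w, ⟪T v, w⟫ = ⟪v, T w⟫ := J.assoc_inner c
  set b := T (T u) - T u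
  have hTb : T (T b) - T b = (-4⁻¹ : ℝ) • b := by
    simp only [b, map_sub]
    linear_combination (norm := module) (-4⁻¹ : ℝ) • hc.mul_cubic u + (2⁻¹ : ℝ) • hc.mul_cubic (T u)
  have hbb : ‖b‖ ^ 2 = -4⁻¹ * ⟪b, u⟫ := by
    rw [← real_inner_self_eq_norm_sq]
    calc ⟪b, b⟫ = ⟪b, T (T u)⟫ - ⟪b, T u⟫ := inner_sub_right _ _ _
      _ = ⟪T (T b) - T b, u⟫ := by rw [inner_sub_left (T (T b)), hT (T b), hT b, hT b]
      _ = -4⁻¹ * ⟪b, u⟫ := by rw [hTb, real_inner_smul_left]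
  have hbu : ⟪b, u⟫ = ‖T u‖ ^ 2 - ⟪T u, u⟫ := by
    rw [inner_sub_left, hT, real_inner_comm, real_inner_self_eq_norm_sq]
  linarith

variable (J) [FiniteDimensional ℝ V]

theorem exists_finsupp_eigenvectors_mem_adjoin (a : V) :
    ∃ e : ℝ →₀ V, (∀ μ, e μ ∈ J.adjoin a) ∧ (∀ μ, J.mul a (e μ) = μ • e μ) ∧
      (e.sum fun _ v => v) = a := by
  let T : J.adjoin a →ₗ[ℝ] J.adjoin a :=
    (J.mul a).restrict fun _ hv => J.mul_mem_adjoin (J.self_mem_adjoin a) hv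
  have hT : T.IsSymmetric := fun v w => J.assoc_inner a v w
  obtain ⟨f, hf, hsum⟩ := hT.exists_finsupp_eigenvectors ⟨a, J.self_mem_adjoin a⟩
  refine ⟨f.mapRange Subtype.val rfl, fun μ => (f μ).2, fun μ => congrArg Subtype.val (hf μ), ?_⟩
  rw [Finsupp.sum_mapRange_index fun _ => rfl]
  simpa [Finsupp.sum] using congrArg Subtype.val hsum

theorem exists_spectral_decomposition (a : V) :
    ∃ (S : Finset ℝ) (c : ℝ → V), (∀ μ, c μ ∈ J.adjoin a) ∧ (∀ μ, J.IsIdem (c μ)) ∧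
      (∀ μ ν, μ ≠ ν → J.mul (c μ) (c ν) = 0) ∧ a = ∑ μ ∈ S, μ • c μ := by
  obtain ⟨e, hmem, heigen, hsum⟩ := J.exists_finsupp_eigenvectors_mem_adjoin a
  have hcross : ∀ μ ν, μ ≠ ν → J.mul (e μ) (e ν) = 0 := fun μ ν =>
    J.mul_eq_zero_of_eigenvectors (hmem μ) (hmem ν) (heigen μ) (heigen ν)
  have hsq : ∀ μ, J.mul (e μ) (e μ) = μ • e μ := by
    intro μ
    by_cases hμ : μ ∈ e.support
    · rw [← heigen, ← hsum, Finsupp.sum, map_sum, LinearMap.sum_apply,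
        Finset.sum_eq_single_of_mem μ hμ fun ν _ hνμ => hcross ν μ hνμ]
    · simp [Finsupp.notMem_support_iff.mp hμ]
  have he0 : e 0 = 0 := J.eq_zero_of_mul_self_eq_zero (by rw [hsq, zero_smul])
  refine ⟨e.support, fun μ => μ⁻¹ • e μ, fun μ => Submodule.smul_mem _ _ (hmem μ),
    fun μ => ?_, fun μ ν hμν => ?_, ?_⟩
  · simp only [IsIdem, map_smul, LinearMap.smul_apply, hsq, smul_smul]
    rcases eq_or_ne μ 0 with rfl | hμ
    · simp
    · field_simp
  · simp only [map_smul, LinearMap.smul_apply, hcross μ ν hμν, smul_zero]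
  · conv_lhs => rw [← hsum, Finsupp.sum]
    refine Finset.sum_congr rfl fun μ _ => ?_
    rcases eq_or_ne μ 0 with rfl | hμ
    · rw [he0, zero_smul]
    · rw [smul_smul, mul_inv_cancel₀ hμ, one_smul]

theorem inner_mul_self_mul_self_nonneg (w u : V) :
    0 ≤ ⟪J.mul w w, J.mul u u⟫ := by
  obtain ⟨S, c, -, hidem, horth, rfl⟩ := J.exists_spectral_decomposition w
  rw [mul_self_sum_smul S hidem horth, sum_inner]
  refine Finset.sum_nonneg fun μ _ => ?_
  rw [real_inner_smul_left, real_inner_comm, J.assoc_inner, J.comm, real_inner_comm,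
    (hidem μ).inner_mul_self_eq]
  positivity

theorem exists_eq_mul_self_sub_mul_self (a : V) :
    ∃ s ∈ J.adjoin a, ∃ u, a = J.mul s s - J.mul u u ∧ ⟪J.mul s s, J.mul u u⟫ = 0 := by
  obtain ⟨S, c, hmem, hidem, horth, rfl⟩ := J.exists_spectral_decomposition a
  refine ⟨∑ μ ∈ S, √(μ⁺) • c μ, Submodule.sum_mem _ fun μ _ => Submodule.smul_mem _ _ (hmem μ),
    ∑ μ ∈ S, √(μ⁻) • c μ, ?_⟩
  simp only [mul_self_sum_smul S hidem horth, Real.sq_sqrt (posPart_nonneg _),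
    Real.sq_sqrt (negPart_nonneg _)]
  refine ⟨?_, ?_⟩
  · rw [← Finset.sum_sub_distrib]
    simp only [← sub_smul, posPart_sub_negPart]
  · simp only [sum_inner, inner_sum, real_inner_smul_left, real_inner_smul_right]
    refine Finset.sum_eq_zero fun μ _ => Finset.sum_eq_zero fun ν _ => ?_
    rcases eq_or_ne ν μ with rfl | hνμ
    · rcases le_total ν 0 with h | h
      · rw [posPart_eq_zero.mpr h, zero_mul, mul_zero]
      · rw [negPart_eq_zero.mpr h, zero_mul]
    · rw [(hidem ν).inner_eq_zero_of_mul_eq_zero (horth ν μ hνμ), mul_zero, mul_zero]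

end EJA

theorem IsProjection.eq_of_inner_eq_zero_of_inner_nonneg {E : Type*} [NormedAddCommGroup E]
    [InnerProductSpace ℝ E] {D : Set E} {x p P : E} (hp : IsProjection D x p) (hP : P ∈ D)
    (horth : ⟪P, P - x⟫ = 0) (hdual : ∀ z ∈ D, 0 ≤ ⟪z, P - x⟫) : p = P := by
  have hpyth : ‖x - p‖ ^ 2 = ‖x - P‖ ^ 2 + ‖P - p‖ ^ 2 + 2 * ⟪p, P - x⟫ := by
    rw [show x - p = (P - p) - (P - x) by abel, norm_sub_sq_real, inner_sub_left, horth,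
      ← norm_neg (P - x), neg_sub]
    ring
  have hle : ‖x - p‖ ≤ ‖x - P‖ := by simpa only [dist_eq_norm] using hp.2 P hP
  have hzero : ‖P - p‖ = 0 := by
    nlinarith [hdual p hp.1, norm_nonneg (x - p), norm_nonneg (P - p)]
  exact (sub_eq_zero.mp (norm_eq_zero.mp hzero)).symm

/-- Any Jordan subalgebra `L` of a Euclidean Jordan algebra `(V,Q)` is a
lattice-like subspace: for `x ∈ L`, the projection of `x` onto the cone of
squares `Q` of `V` coincides with the projection of `x` onto the cone of
squares `Q₀` of `L`, and lies in `L`; in particular `P_Q(L) ⊆ L`. -/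
theorem jordan_subalgebra_latticeLike
    {V : Type*} [NormedAddCommGroup V] [InnerProductSpace ℝ V]
    [FiniteDimensional ℝ V] (J : EJA V)
    (L : Submodule ℝ V) (hL : ∀ x ∈ L, ∀ y ∈ L, J.mul x y ∈ L) :
    ∀ x ∈ L, ∀ p q : V,
      IsProjection J.coneOfSquares x p →
      IsProjection {z | ∃ y ∈ L, z = J.mul y y} x q →
      p = q ∧ p ∈ L := by
  intro x hx p q hp hq
  obtain ⟨s, hs, u, hx_eq, horth⟩ := J.exists_eq_mul_self_sub_mul_self x
  have hsL : s ∈ L := J.adjoin_le hL hx hs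
  have hgap : J.mul s s - x = J.mul u u := by rw [hx_eq]; abel
  have hdual (w : V) : 0 ≤ ⟪J.mul w w, J.mul s s - x⟫ :=
    hgap ▸ J.inner_mul_self_mul_self_nonneg w u
  have hps : p = J.mul s s := hp.eq_of_inner_eq_zero_of_inner_nonneg ⟨s, rfl⟩ (hgap ▸ horth)
    (by rintro _ ⟨w, rfl⟩; exact hdual w)
  have hqs : q = J.mul s s := hq.eq_of_inner_eq_zero_of_inner_nonneg ⟨s, hsL, rfl⟩ (hgap ▸ horth)
    (by rintro _ ⟨w, -, rfl⟩; exact hdual w)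
  exact ⟨hps.trans hqs.symm, hps ▸ hL s hsL s hsL⟩
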